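/- arXiv:2107.02883 — 3 statements merged into one kernel-verified Lean document; each statement's English description precedes it below -/
import Mathlib

section
/- Let d ≥ 2, r > 0, and h : (0, r] → ℝ≥0 increasing with ∫₀^r h(t)/t^{d-1} dt < ∞. Then the Riemann–Stieltjes integral ∫₀^r k_{d-2}(t) dh(t) converges (is > −∞), where k_0(t) = ln t and k_{d-2}(t) = −t^{2−d} for d > 2. -/
/-!
Write `μ` for the Stieltjes measure of `h` and `k = kk d`. Since `k' s = c / s^(d-1)` with
`c = kkCoeff d > 0`, we have `k r - k t = ∫_t^r k'`, and Tonelli gives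
`∫_(0,r] (k r - k t) dμ(t) = ∫_0^r k'(s) μ(0,s) ds ≤ c ∫_0^r h(s) / s^(d-1) ds < ∞`,
because `μ(0,s) ≤ h s - h 0 ≤ h s` (right continuity makes `h 0 ≥ 0`).
So `k r - k` is integrable against `μ`, and so is `k`, as `μ(0,r]` is finite.
-/

open MeasureTheory Set Filter
open scoped ENNReal

/-- The kernel `k_{d-2}`: `log t` when `d = 2` and `-1/t^(d-2)` when `d > 2`. -/
noncomputable def kk (d : ℕ) (t : ℝ) : ℝ := if d = 2 then Real.log t else -1 / t ^ (d - 2)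

theorem StieltjesFunction.le_apply_of_forall_Ioo_le (f : StieltjesFunction ℝ) {a b c : ℝ}
    (hab : a < b) (hc : ∀ t ∈ Ioo a b, c ≤ f t) : c ≤ f a :=
  ge_of_tendsto ((f.right_continuous a).tendsto.mono_left (nhdsWithin_mono _ Ioi_subset_Ici_self))
    (eventually_of_mem (Ioo_mem_nhdsGT hab) hc)

theorem lintegral_Ioc_lintegral_Ioc_eq {μ ν : Measure ℝ} [SFinite μ] [SFinite ν]
    {g : ℝ → ℝ≥0∞} (hg : Measurable g) (a b : ℝ) :
    ∫⁻ t in Ioc a b, ∫⁻ s in Ioc t b, g s ∂ν ∂μ = ∫⁻ s in Ioc a b, μ (Ioo a s) * g s ∂ν := by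
  set F : ℝ → ℝ → ℝ≥0∞ := fun t s => {p : ℝ × ℝ | p.1 < p.2}.indicator (fun p => g p.2) (t, s)
  have hF : Measurable (Function.uncurry F) :=
    (hg.comp measurable_snd).indicator (measurableSet_lt measurable_fst measurable_snd)
  calc ∫⁻ t in Ioc a b, ∫⁻ s in Ioc t b, g s ∂ν ∂μ
      = ∫⁻ t in Ioc a b, ∫⁻ s in Ioc a b, F t s ∂ν ∂μ := by
        refine setLIntegral_congr_fun measurableSet_Ioc fun t ht => ?_
        have hF_t : F t = (Ioi t).indicator g := by
          ext s; simp [F, indicator_apply]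
        have hset : Ioi t ∩ Ioc a b = Ioc t b := by
          ext s; simp only [mem_inter_iff, mem_Ioi, mem_Ioc] at ht ⊢; grind
        rw [hF_t, lintegral_indicator measurableSet_Ioi, Measure.restrict_restrict measurableSet_Ioi,
          hset]
    _ = ∫⁻ s in Ioc a b, ∫⁻ t in Ioc a b, F t s ∂μ ∂ν := lintegral_lintegral_swap hF.aemeasurable
    _ = ∫⁻ s in Ioc a b, μ (Ioo a s) * g s ∂ν := by
        refine setLIntegral_congr_fun measurableSet_Ioc fun s hs => ?_
        have hF_s : (F · s) = (Iio s).indicator (fun _ => g s) := by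
          ext t; simp [F, indicator_apply]
        have hset : Iio s ∩ Ioc a b = Ioo a s := by
          ext t; simp only [mem_inter_iff, mem_Iio, mem_Ioc, mem_Ioo] at hs ⊢; grind
        rw [hF_s, lintegral_indicator_const measurableSet_Iio,
          Measure.restrict_apply measurableSet_Iio, hset, mul_comm]

noncomputable def kkCoeff (d : ℕ) : ℝ := if d = 2 then 1 else d - 2

theorem kkCoeff_pos {d : ℕ} (hd : 2 ≤ d) : 0 < kkCoeff d := by
  unfold kkCoeff
  split_ifs with h2
  · exact one_pos
  · have : (2 : ℝ) < d := by exact_mod_cast (by omega : 2 < d)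
    linarith

theorem measurable_kk (d : ℕ) : Measurable (kk d) := by
  unfold kk
  split_ifs
  · exact Real.measurable_log
  · fun_prop

theorem hasDerivAt_kk {d : ℕ} (hd : 2 ≤ d) {x : ℝ} (hx : 0 < x) :
    HasDerivAt (kk d) (kkCoeff d / x ^ (d - 1)) x := by
  obtain ⟨n, rfl⟩ : ∃ n, d = n + 2 := ⟨d - 2, by omega⟩
  rcases n with _ | n
  · have hkk : kk 2 = Real.log := by ext y; simp [kk]
    simpa [hkk, kkCoeff] using Real.hasDerivAt_log hx.ne'
  · have hkk : kk (n + 1 + 2) = fun y => -(y ^ (n + 1))⁻¹ := by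
      ext y; simp [kk, neg_div]
    rw [hkk]
    refine (((hasDerivAt_pow (n + 1) x).inv (pow_ne_zero _ hx.ne')).neg).congr_deriv ?_
    simp only [kkCoeff, show n + 1 + 2 ≠ 2 by omega, if_false, show n + 1 + 2 - 1 = n + 2 by omega,
      Nat.add_sub_cancel]
    push_cast
    field_simp
    ring

theorem monotoneOn_kk {d : ℕ} (hd : 2 ≤ d) : MonotoneOn (kk d) (Ioi 0) := by
  have hderiv : ∀ x ∈ Ioi (0 : ℝ), HasDerivAt (kk d) (kkCoeff d / x ^ (d - 1)) x :=
    fun x hx => hasDerivAt_kk hd hx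
  refine monotoneOn_of_hasDerivWithinAt_nonneg (f' := fun x => kkCoeff d / x ^ (d - 1))
    (convex_Ioi 0) (fun x hx => (hderiv x hx).continuousAt.continuousWithinAt)
    (fun x hx => ?_) (fun x hx => ?_)
  · rw [interior_Ioi] at hx
    exact (hderiv x hx).hasDerivWithinAt
  · rw [interior_Ioi] at hx
    exact div_nonneg (kkCoeff_pos hd).le (pow_nonneg (le_of_lt hx) _)

theorem ofReal_kk_sub_kk_eq_lintegral {d : ℕ} (hd : 2 ≤ d) {t r : ℝ} (ht : 0 < t) (htr : t ≤ r) :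
    ENNReal.ofReal (kk d r - kk d t) =
      ∫⁻ s in Ioc t r, ENNReal.ofReal (kkCoeff d / s ^ (d - 1)) := by
  have hcont : ContinuousOn (fun s => kkCoeff d / s ^ (d - 1)) (Icc t r) :=
    continuousOn_const.div (continuousOn_pow _) fun s hs => (pow_pos (ht.trans_le hs.1) _).ne'
  have hint : IntegrableOn (fun s => kkCoeff d / s ^ (d - 1)) (Ioc t r) :=
    hcont.integrableOn_Icc.mono_set Ioc_subset_Icc_self
  rw [← intervalIntegral.integral_eq_sub_of_hasDerivAt
      (fun s hs => hasDerivAt_kk hd (ht.trans_le (uIcc_of_le htr ▸ hs).1))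
      (hcont.intervalIntegrable_of_Icc htr),
    intervalIntegral.integral_of_le htr, ofReal_integral_eq_lintegral_ofReal hint]
  filter_upwards [ae_restrict_mem measurableSet_Ioc] with s hs
  exact div_nonneg (kkCoeff_pos hd).le (pow_nonneg (ht.trans hs.1).le _)

theorem lintegral_ofReal_kk_sub_kk_le {d : ℕ} (hd : 2 ≤ d) {r : ℝ} (hr : 0 < r)
    (h : StieltjesFunction ℝ) (hpos : ∀ t ∈ Ioc (0 : ℝ) r, 0 ≤ h t) :
    ∫⁻ t in Ioc 0 r, ENNReal.ofReal (kk d r - kk d t) ∂h.measure ≤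
      ENNReal.ofReal (kkCoeff d) * ∫⁻ s in Ioc 0 r, ‖h s / s ^ (d - 1)‖ₑ := by
  have hh : Measurable h := h.mono.measurable
  have h0 : 0 ≤ h 0 := h.le_apply_of_forall_Ioo_le hr fun t ht => hpos t (Ioo_subset_Ioc_self ht)
  have hweight (s : ℝ) (hs : s ∈ Ioc 0 r) :
      h.measure (Ioo 0 s) * ENNReal.ofReal (kkCoeff d / s ^ (d - 1))
        ≤ ENNReal.ofReal (kkCoeff d) * ‖h s / s ^ (d - 1)‖ₑ := by
    have hμ : h.measure (Ioo 0 s) ≤ ENNReal.ofReal (h s) :=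
      calc h.measure (Ioo 0 s) ≤ h.measure (Ioc 0 s) := measure_mono Ioo_subset_Ioc_self
        _ = ENNReal.ofReal (h s - h 0) := h.measure_Ioc 0 s
        _ ≤ ENNReal.ofReal (h s) := ENNReal.ofReal_le_ofReal (by linarith)
    calc h.measure (Ioo 0 s) * ENNReal.ofReal (kkCoeff d / s ^ (d - 1))
        ≤ ENNReal.ofReal (h s) * ENNReal.ofReal (kkCoeff d / s ^ (d - 1)) := by gcongr
      _ = ENNReal.ofReal (kkCoeff d) * ENNReal.ofReal (h s / s ^ (d - 1)) := by
        rw [← ENNReal.ofReal_mul (hpos s hs), ← ENNReal.ofReal_mul (kkCoeff_pos hd).le]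
        congr 1
        ring
      _ ≤ ENNReal.ofReal (kkCoeff d) * ‖h s / s ^ (d - 1)‖ₑ := by
        gcongr
        exact Real.ofReal_le_enorm _
  have hg : Measurable fun s : ℝ => ENNReal.ofReal (kkCoeff d / s ^ (d - 1)) := by fun_prop
  calc ∫⁻ t in Ioc 0 r, ENNReal.ofReal (kk d r - kk d t) ∂h.measure
      = ∫⁻ t in Ioc 0 r, ∫⁻ s in Ioc t r, ENNReal.ofReal (kkCoeff d / s ^ (d - 1)) ∂volume
          ∂h.measure :=
        setLIntegral_congr_fun measurableSet_Ioc fun t ht =>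
          ofReal_kk_sub_kk_eq_lintegral hd ht.1 ht.2
    _ = ∫⁻ s in Ioc 0 r, h.measure (Ioo 0 s) * ENNReal.ofReal (kkCoeff d / s ^ (d - 1)) :=
        lintegral_Ioc_lintegral_Ioc_eq hg 0 r
    _ ≤ ∫⁻ s in Ioc 0 r, ENNReal.ofReal (kkCoeff d) * ‖h s / s ^ (d - 1)‖ₑ :=
        setLIntegral_mono (by fun_prop) hweight
    _ = ENNReal.ofReal (kkCoeff d) * ∫⁻ s in Ioc 0 r, ‖h s / s ^ (d - 1)‖ₑ :=
        lintegral_const_mul _ (by fun_prop)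

/-- If `h` is a nonnegative increasing (Stieltjes) function on `(0, r]` with
`∫₀^r h(t)/t^(d-1) dt < ∞`, then the Stieltjes integral `∫₀^r k_{d-2}(t) dh(t)`
converges, i.e. `k_{d-2}` is integrable against the Lebesgue–Stieltjes measure of `h`
on `(0, r]`. -/
theorem stmt2 (d : ℕ) (hd : 2 ≤ d) (r : ℝ) (hr : 0 < r) (h : StieltjesFunction ℝ)
    (hpos : ∀ t ∈ Set.Ioc (0 : ℝ) r, 0 ≤ h t)
    (hint : MeasureTheory.IntegrableOn (fun t => h t / t ^ (d - 1)) (Set.Ioc (0 : ℝ) r)) :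
    MeasureTheory.IntegrableOn (kk d) (Set.Ioc (0 : ℝ) r) h.measure := by
  have hgap : IntegrableOn (fun t => kk d r - kk d t) (Ioc 0 r) h.measure := by
    refine (lintegral_ofReal_ne_top_iff_integrable
      (measurable_const.sub (measurable_kk d)).aestronglyMeasurable ?_).1 ?_
    · filter_upwards [ae_restrict_mem measurableSet_Ioc] with t ht
      exact sub_nonneg.2 (monotoneOn_kk hd ht.1 (hr : r ∈ Ioi 0) ht.2)
    · exact ((lintegral_ofReal_kk_sub_kk_le hd hr h hpos).trans_lt
        (ENNReal.mul_lt_top ENNReal.ofReal_lt_top hint.2)).ne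
  exact ((integrableOn_const (C := kk d r) measure_Ioc_lt_top.ne).sub hgap).congr_fun
    (fun t _ => sub_sub_cancel _ _) measurableSet_Ioc
end

section
/- Let d ≥ 2, r > 0, and h : (0, r] → ℝ≥0 increasing. If the Riemann–Stieltjes integral ∫₀^r k_{d-2}(t) dh(t) converges (is finite), then the limit h(0) := lim_{t→0⁺} h(t) exists in ℝ≥0 and lim_{t→0⁺} (h(t) − h(0))·k_{d-2}(t) = 0. -/
open MeasureTheory Set Filter

/-! The limit is `h 0`, by right-continuity of the Stieltjes function `h`. Writing `μ` for its
Stieltjes measure, `h t - h 0 = μ (0, t]`, and since `|k|` decreases on `(0, 1]`,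
`(h t - h 0) |k t| ≤ ∫_{(0, t]} |k| dμ`. The right-hand side tends to `0` as `t → 0⁺` by
continuity from above of the finite measure `|k| dμ` on `(0, r]`. -/

open scoped ENNReal Topology

theorem tendsto_measure_Ioc_nhdsGT {α : Type*} [LinearOrder α] [TopologicalSpace α]
    [OrderTopology α] [FirstCountableTopology α] [DenselyOrdered α] [MeasurableSpace α]
    [OpensMeasurableSpace α] (μ : Measure α) {a b : α} (hab : a < b)
    (hb : μ (Ioc a b) ≠ ∞) : Tendsto (fun t => μ (Ioc a t)) (𝓝[>] a) (𝓝 0) := by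
  have hempty : ⋂ t > a, Ioc a t = ∅ := by
    refine eq_empty_of_forall_notMem fun x hx => ?_
    have hax : a < x := (mem_iInter₂.1 hx b hab).1
    obtain ⟨t, hat, htx⟩ := exists_between hax
    exact (mem_iInter₂.1 hx t hat).2.not_gt htx
  have := tendsto_measure_biInter_gt (μ := μ) (fun _ _ => measurableSet_Ioc.nullMeasurableSet)
    (fun _ _ _ hij => Ioc_subset_Ioc_right hij) ⟨b, hab, hb⟩
  rwa [hempty, measure_empty] at this

theorem antitoneOn_norm_kk (d : ℕ) : AntitoneOn (fun t => ‖kk d t‖) (Ioc 0 1) := by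
  intro s ⟨hs, _⟩ t ⟨ht, ht1⟩ hst
  simp only [kk, Real.norm_eq_abs]
  split_ifs
  · rw [abs_of_nonpos (Real.log_nonpos ht.le ht1),
      abs_of_nonpos (Real.log_nonpos hs.le (hst.trans ht1))]
    exact neg_le_neg (Real.log_le_log hs hst)
  · simp only [abs_div, abs_neg, abs_one, abs_pow, abs_of_pos hs, abs_of_pos ht]
    exact one_div_le_one_div_of_le (by positivity) (pow_le_pow_left₀ hs.le hst _)

theorem StieltjesFunction.tendsto_sub_mul_nhdsGT (h : StieltjesFunction ℝ) {f : ℝ → ℝ}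
    {a b : ℝ} (hab : a < b) (hf : AntitoneOn (fun t => ‖f t‖) (Ioc a b))
    (hint : IntegrableOn f (Ioc a b) h.measure) :
    Tendsto (fun t => (h t - h a) * f t) (𝓝[>] a) (𝓝 0) := by
  set ν := h.measure.withDensity (fun s => ‖f s‖ₑ)
  have hνb : ν (Ioc a b) ≠ ∞ := by
    rw [withDensity_apply _ measurableSet_Ioc]
    exact hint.2.ne
  have hbound : ∀ t ∈ Ioc a b, ‖(h t - h a) * f t‖ ≤ (ν (Ioc a t)).toReal := by
    intro t ⟨hat, htb⟩
    have hfin : ν (Ioc a t) ≠ ∞ :=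
      ne_top_of_le_ne_top hνb (measure_mono (Ioc_subset_Ioc_right htb))
    have hincr : 0 ≤ h t - h a := sub_nonneg.2 (h.mono hat.le)
    have hmin : ‖f t‖ₑ ≤ ⨅ s ∈ Ioc a t, ‖f s‖ₑ := le_iInf₂ fun s ⟨has, hst⟩ =>
      enorm_le_iff_norm_le.2 <| hf ⟨has, hst.trans htb⟩ ⟨hat, htb⟩ hst
    have key : ‖f t‖ₑ * h.measure (Ioc a t) ≤ ν (Ioc a t) := by
      rw [withDensity_apply _ measurableSet_Ioc]
      exact (mul_le_mul_left hmin _).trans (iInf_mul_le_setLIntegral _ measurableSet_Ioc)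
    have := ENNReal.toReal_mono hfin key
    rwa [ENNReal.toReal_mul, h.measure_Ioc, ENNReal.toReal_ofReal hincr, toReal_enorm, mul_comm,
      ← Real.norm_of_nonneg hincr, ← norm_mul] at this
  refine squeeze_zero_norm' (mem_of_superset (Ioc_mem_nhdsGT hab) hbound) ?_
  exact ENNReal.toReal_zero ▸ (ENNReal.tendsto_toReal ENNReal.zero_ne_top).comp
      (tendsto_measure_Ioc_nhdsGT ν hab hνb)

theorem stmt3_general (d : ℕ) (r : ℝ) (hr : 0 < r) (h : StieltjesFunction ℝ)
    (hpos : ∀ t ∈ Set.Ioc (0 : ℝ) r, 0 ≤ h t)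
    (hint : MeasureTheory.IntegrableOn (kk d) (Set.Ioc (0 : ℝ) r) h.measure) :
    ∃ L : ℝ, 0 ≤ L ∧ Filter.Tendsto (⇑h) (nhdsWithin 0 (Set.Ioi 0)) (nhds L) ∧
      Filter.Tendsto (fun t => (h t - L) * kk d t) (nhdsWithin 0 (Set.Ioi 0)) (nhds 0) := by
  have hlim : Tendsto h (𝓝[>] 0) (𝓝 (h 0)) :=
    (h.right_continuous 0).tendsto.mono_left (nhdsWithin_mono 0 Ioi_subset_Ici_self)
  have hr1 : (0 : ℝ) < min r 1 := lt_min hr one_pos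
  refine ⟨h 0, ge_of_tendsto hlim (mem_of_superset (Ioc_mem_nhdsGT hr) hpos), hlim, ?_⟩
  exact h.tendsto_sub_mul_nhdsGT hr1 ((antitoneOn_norm_kk d).mono (Ioc_subset_Ioc_right
    (min_le_right _ _))) (hint.mono_set (Ioc_subset_Ioc_right (min_le_left _ _)))

/-- If `h` is a nonnegative increasing (Stieltjes) function on `(0, r]` and the Stieltjes
integral `∫₀^r k_{d-2}(t) dh(t)` converges, then `h(0) := lim_{t→0⁺} h(t)` exists (in `ℝ≥0`)
and `lim_{t→0⁺} (h(t) - h(0)) · k_{d-2}(t) = 0`. -/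
theorem stmt3 (d : ℕ) (hd : 2 ≤ d) (r : ℝ) (hr : 0 < r) (h : StieltjesFunction ℝ)
    (hpos : ∀ t ∈ Set.Ioc (0 : ℝ) r, 0 ≤ h t)
    (hint : MeasureTheory.IntegrableOn (kk d) (Set.Ioc (0 : ℝ) r) h.measure) :
    ∃ L : ℝ, 0 ≤ L ∧ Filter.Tendsto (⇑h) (nhdsWithin 0 (Set.Ioi 0)) (nhds L) ∧
      Filter.Tendsto (fun t => (h t - L) * kk d t) (nhdsWithin 0 (Set.Ioi 0)) (nhds 0) :=
  stmt3_general d r hr h hpos hint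
end

section
/- Let d ≥ 2, r > 0, and h : (0, r] → ℝ≥0 increasing. If ∫₀^r k_{d-2}(t) dh(t) converges, then ∫₀^r (h(t) − h(0))/t^{d-1} dt < ∞, where h(0) := lim_{t→0⁺} h(t). -/
/-!
Since `h` is right-continuous, `h(0⁺) = h 0` and `h t - h 0 = μ_h (0, t]`. By Tonelli,
`∫₀^r (h t - h 0) / t^(d-1) dt = ∫_{(0,r]} (∫_s^r t^(1-d) dt) dμ_h(s)`, and the inner integral is
at most `k_{d-2}(r) - k_{d-2}(s)` because `k_{d-2}' ≥ t^(1-d)` on `(0, ∞)`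
(with equality for `d = 2` and a factor `d - 2` for `d > 2`).
So the whole integral is bounded by `∫_{(0,r]} (k_{d-2}(r) - k_{d-2}(s)) dμ_h(s) < ∞`.
-/

open MeasureTheory Set Filter
open scoped ENNReal

lemma exists_hasDerivAt_kk_ge {d : ℕ} (hd : 2 ≤ d) {t : ℝ} (ht : 0 < t) :
    ∃ k', HasDerivAt (kk d) k' t ∧ (t ^ (d - 1))⁻¹ ≤ k' := by
  obtain rfl | ⟨m, rfl⟩ : d = 2 ∨ ∃ m, d = m + 3 := by
    rcases hd.eq_or_lt with hd2 | hd3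
    · exact .inl hd2.symm
    · exact .inr ⟨d - 3, by omega⟩
  · have hkk : kk 2 = Real.log := by ext x; simp [kk]
    exact ⟨t⁻¹, hkk ▸ Real.hasDerivAt_log ht.ne', by simp⟩
  · have hkk : kk (m + 3) = fun x => -(x ^ (m + 1))⁻¹ := by
      ext x; simp [kk, neg_div]
    have hderiv : HasDerivAt (fun x : ℝ => -(x ^ (m + 1))⁻¹) ((m + 1) * (t ^ (m + 2))⁻¹) t :=
      ((hasDerivAt_pow (m + 1) t).inv (pow_ne_zero _ ht.ne')).neg.congr_deriv (by
        simp only [Nat.cast_add, Nat.cast_one, add_tsub_cancel_right]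
        field_simp
        ring)
    refine ⟨(m + 1) * (t ^ (m + 2))⁻¹, hkk ▸ hderiv, ?_⟩
    simpa using le_mul_of_one_le_left (by positivity) (by simp : (1 : ℝ) ≤ m + 1)

lemma setLIntegral_Icc_inv_pow_le_kk_sub {d : ℕ} (hd : 2 ≤ d) {s r : ℝ} (hs : 0 < s)
    (hsr : s ≤ r) :
    ∫⁻ t in Icc s r, ENNReal.ofReal (t ^ (d - 1))⁻¹ ≤ ENNReal.ofReal (kk d r - kk d s) := by
  have hcont : ContinuousOn (fun t : ℝ => (t ^ (d - 1))⁻¹) (Icc s r) :=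
    (continuous_pow _).continuousOn.inv₀ fun t ht => pow_ne_zero _ (hs.trans_le ht.1).ne'
  have hnonneg : 0 ≤ᵐ[volume.restrict (Icc s r)] fun t : ℝ => (t ^ (d - 1))⁻¹ :=
    (ae_restrict_iff' measurableSet_Icc).2 <| ae_of_all _ fun t ht =>
      inv_nonneg.2 (pow_nonneg (hs.trans_le ht.1).le _)
  have hderiv : ∀ t ∈ Ici s,
      HasDerivAt (kk d) (deriv (kk d) t) t ∧ (t ^ (d - 1))⁻¹ ≤ deriv (kk d) t := fun t ht => by
    obtain ⟨k', hk, hle⟩ := exists_hasDerivAt_kk_ge hd (hs.trans_le ht)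
    rw [hk.deriv]
    exact ⟨hk, hle⟩
  have hFTC : ∫ t in s..r, (t ^ (d - 1))⁻¹ ≤ kk d r - kk d s :=
    intervalIntegral.integral_le_sub_of_hasDeriv_right_of_le hsr
      (fun t ht => (hderiv t ht.1).1.continuousAt.continuousWithinAt)
      (fun t ht => (hderiv t ht.1.le).1.hasDerivWithinAt) hcont.integrableOn_Icc
      (fun t ht => (hderiv t ht.1.le).2)
  rw [← ofReal_integral_eq_lintegral_ofReal hcont.integrableOn_Icc hnonneg,
    integral_Icc_eq_integral_Ioc, ← intervalIntegral.integral_of_le hsr]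
  exact ENNReal.ofReal_le_ofReal hFTC

lemma setLIntegral_ofReal_sub_mul_eq (f : StieltjesFunction ℝ) (ν : Measure ℝ) [SFinite ν]
    {φ : ℝ → ℝ≥0∞} (hφ : Measurable φ) (a r : ℝ) :
    ∫⁻ t in Ioc a r, ENNReal.ofReal (f t - f a) * φ t ∂ν =
      ∫⁻ s in Ioc a r, ∫⁻ t in Icc s r, φ t ∂ν ∂f.measure := by
  set F : ℝ → ℝ → ℝ≥0∞ := fun t s => if s ≤ t then φ t else 0
  have hF : Measurable (Function.uncurry F) :=
    Measurable.ite (measurableSet_le measurable_snd measurable_fst) (hφ.comp measurable_fst)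
      measurable_const
  calc ∫⁻ t in Ioc a r, ENNReal.ofReal (f t - f a) * φ t ∂ν
      = ∫⁻ t in Ioc a r, ∫⁻ s in Ioc a r, F t s ∂f.measure ∂ν := by
        refine setLIntegral_congr_fun measurableSet_Ioc fun t ht => ?_
        simp only [F, ← indicator_apply (Iic t) (fun _ => φ t), ← mem_Iic]
        rw [lintegral_indicator measurableSet_Iic, setLIntegral_const,
          Measure.restrict_apply measurableSet_Iic, Iic_inter_Ioc_of_le ht.2, f.measure_Ioc,
          mul_comm]
    _ = ∫⁻ s in Ioc a r, ∫⁻ t in Ioc a r, F t s ∂ν ∂f.measure :=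
        lintegral_lintegral_swap hF.aemeasurable
    _ = ∫⁻ s in Ioc a r, ∫⁻ t in Icc s r, φ t ∂ν ∂f.measure := by
        refine setLIntegral_congr_fun measurableSet_Ioc fun s hs => ?_
        have hset : Ici s ∩ Ioc a r = Icc s r := by
          ext x; simp only [mem_inter_iff, mem_Ici, mem_Ioc, mem_Icc]
          exact ⟨fun ⟨hsx, _, hxr⟩ => ⟨hsx, hxr⟩, fun ⟨hsx, hxr⟩ => ⟨hsx, hs.1.trans_le hsx, hxr⟩⟩
        simp only [F, ← indicator_apply (Ici s) φ, ← mem_Ici]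
        rw [lintegral_indicator measurableSet_Ici, Measure.restrict_restrict measurableSet_Ici,
          hset]

theorem stmt4_general (d : ℕ) (hd : 2 ≤ d) (r : ℝ) (h : StieltjesFunction ℝ)
    (hint : MeasureTheory.IntegrableOn (kk d) (Set.Ioc (0 : ℝ) r) h.measure) :
    ∃ L : ℝ, Filter.Tendsto (⇑h) (nhdsWithin 0 (Set.Ioi 0)) (nhds L) ∧
      MeasureTheory.IntegrableOn (fun t => (h t - L) / t ^ (d - 1)) (Set.Ioc (0 : ℝ) r) := by
  refine ⟨h 0, (h.right_continuous 0).tendsto.mono_left (nhdsWithin_mono 0 Ioi_subset_Ici_self),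
    ((h.mono.measurable.sub measurable_const).div (measurable_id.pow_const _)).aestronglyMeasurable,
    ?_⟩
  have hkernel : IntegrableOn (fun s => kk d r - kk d s) (Ioc 0 r) h.measure :=
    (integrableOn_const measure_Ioc_lt_top.ne).sub hint
  calc ∫⁻ t in Ioc 0 r, ‖(h t - h 0) / t ^ (d - 1)‖ₑ
      = ∫⁻ t in Ioc 0 r, ENNReal.ofReal (h t - h 0) * ENNReal.ofReal (t ^ (d - 1))⁻¹ := by
        refine setLIntegral_congr_fun measurableSet_Ioc fun t ht => ?_
        have hmono : 0 ≤ h t - h 0 := sub_nonneg.2 (h.mono ht.1.le)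
        rw [← ENNReal.ofReal_mul hmono, ← div_eq_mul_inv,
          Real.enorm_eq_ofReal (div_nonneg hmono (pow_nonneg ht.1.le _))]
    _ = ∫⁻ s in Ioc 0 r, ∫⁻ t in Icc s r, ENNReal.ofReal (t ^ (d - 1))⁻¹ ∂volume ∂h.measure :=
        setLIntegral_ofReal_sub_mul_eq h volume (by fun_prop) 0 r
    _ ≤ ∫⁻ s in Ioc 0 r, ENNReal.ofReal (kk d r - kk d s) ∂h.measure :=
        setLIntegral_mono' measurableSet_Ioc fun s hs =>
          setLIntegral_Icc_inv_pow_le_kk_sub hd hs.1 hs.2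
    _ < ∞ := hkernel.lintegral_lt_top

/-- If `h` is a nonnegative increasing (Stieltjes) function on `(0, r]` and the Stieltjes
integral `∫₀^r k_{d-2}(t) dh(t)` converges, then `∫₀^r (h(t) - h(0))/t^(d-1) dt < ∞`,
where `h(0) := lim_{t→0⁺} h(t)`. -/
theorem stmt4 (d : ℕ) (hd : 2 ≤ d) (r : ℝ) (hr : 0 < r) (h : StieltjesFunction ℝ)
    (hpos : ∀ t ∈ Set.Ioc (0 : ℝ) r, 0 ≤ h t)
    (hint : MeasureTheory.IntegrableOn (kk d) (Set.Ioc (0 : ℝ) r) h.measure) :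
    ∃ L : ℝ, Filter.Tendsto (⇑h) (nhdsWithin 0 (Set.Ioi 0)) (nhds L) ∧
      MeasureTheory.IntegrableOn (fun t => (h t - L) / t ^ (d - 1)) (Set.Ioc (0 : ℝ) r) :=
  stmt4_general d hd r h hint
end
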